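/- Doob's minimal inequality for SL-submartingales, part (ii): if (X_j, F_j)_{j=1}^n is an SL-submartingale, then for every λ > 0, λ·v(min_{1≤j≤n} X_j ≤ −λ) ≤ E(X_n) − E(X_1) + E(−I_{{min_{1≤j≤n} X_j ≤ −λ}} X_n) ≤ E(X_n) − E(X_1) + E(X_n⁻), where v(A) := −E(−I_A) and X⁻ := −min(X,0). -/

import Mathlib

open MeasureTheory Filter Set

/-- An `F_t`-consistent sublinear expectation (`SL`-expectation) in discrete time:
a filtration `F t` of sub-σ-algebras, a space `H` of measurable real functions closed
under constants, `|·|`, addition, scalar multiplication and multiplication by indicators,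
and conditional expectations `Et t : H → H ∩ mF_t` satisfying monotonicity, the tower
property, locality, projection, sub-additivity, positive homogeneity and the monotone
continuity (Fatou) property.  `E := Et 0` is identified with a real-valued functional. -/
structure CondSLExp (Ω : Type*) [m : MeasurableSpace Ω] where
  F : ℕ → MeasurableSpace Ω
  F_le : ∀ t, F t ≤ m
  F_mono : Monotone F
  H : Set (Ω → ℝ)
  H_meas : ∀ X ∈ H, Measurable X
  const_mem : ∀ c : ℝ, (fun _ => c) ∈ H
  abs_mem : ∀ X ∈ H, (fun ω => |X ω|) ∈ H
  add_mem : ∀ X ∈ H, ∀ Y ∈ H, X + Y ∈ H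
  smul_mem : ∀ (c : ℝ), ∀ X ∈ H, c • X ∈ H
  indmul_mem : ∀ (A : Set Ω), MeasurableSet A → ∀ X ∈ H, A.indicator X ∈ H
  Et : ℕ → (Ω → ℝ) → (Ω → ℝ)
  E : (Ω → ℝ) → ℝ
  E0_eq : ∀ X ∈ H, ∀ ω, Et 0 X ω = E X
  Et_mem : ∀ t, ∀ X ∈ H, Et t X ∈ H
  Et_meas : ∀ t, ∀ X ∈ H, Measurable[F t] (Et t X)
  mono : ∀ t, ∀ X ∈ H, ∀ Y ∈ H, (∀ ω, X ω ≤ Y ω) → ∀ ω, Et t X ω ≤ Et t Y ω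
  tower : ∀ s t : ℕ, s ≤ t → ∀ Y ∈ H, Et s (Et t Y) = Et s Y
  locality : ∀ (t : ℕ) (A : Set Ω), MeasurableSet[F t] A → ∀ Y ∈ H,
      Et t (A.indicator Y) = A.indicator (Et t Y)
  proj : ∀ t, ∀ Y ∈ H, Measurable[F t] Y → Et t Y = Y
  subadd : ∀ t, ∀ X ∈ H, ∀ Y ∈ H, ∀ ω, Et t (X + Y) ω ≤ Et t X ω + Et t Y ω
  poshom : ∀ (t : ℕ) (lam : Ω → ℝ), lam ∈ H → Measurable[F t] lam → ∀ Y ∈ H,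
      (fun ω => lam ω * Y ω) ∈ H →
      ∀ ω, Et t (fun ω' => lam ω' * Y ω') ω
        = max (lam ω) 0 * Et t Y ω + max (-(lam ω)) 0 * Et t (fun ω' => -(Y ω')) ω
  fatou : ∀ X : ℕ → Ω → ℝ, (∀ i, X i ∈ H) → (∀ ω, Antitone fun i => X i ω) →
      (∀ ω, Tendsto (fun i => X i ω) atTop (nhds 0)) →
      Tendsto (fun i => E (X i)) atTop (nhds 0)

variable {Ω : Type*} [MeasurableSpace Ω]

/-- The upper capacity `V(A) := E(I_A)`. -/
noncomputable def CondSLExp.V (S : CondSLExp Ω) (A : Set Ω) : ℝ :=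
  S.E (A.indicator fun _ => (1 : ℝ))

/-- A property holds quasi-surely if it holds outside a set `N` with `E(I_N) = 0`. -/
def CondSLExp.QS (S : CondSLExp Ω) (P : Ω → Prop) : Prop :=
  ∃ N : Set Ω, S.V N = 0 ∧ ∀ ω ∉ N, P ω

/-- `X` is independent of `F n`: `X` is independent of `I_A` under `E` for every
`A ∈ F n`, i.e. `E(φ(I_A, X)) = E(φ̄(I_A))` where `φ̄(x) := E(φ(x, X))`. -/
def CondSLExp.IndepOf (S : CondSLExp Ω) (X : Ω → ℝ) (n : ℕ) : Prop :=
  ∀ A : Set Ω, MeasurableSet[S.F n] A → ∀ φ : ℝ → ℝ → ℝ,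
    (fun ω => φ (A.indicator (fun _ => (1 : ℝ)) ω) (X ω)) ∈ S.H →
    (∀ x : ℝ, (fun ω => φ x (X ω)) ∈ S.H) →
    (fun ω => S.E fun ω' => φ (A.indicator (fun _ => (1 : ℝ)) ω) (X ω')) ∈ S.H →
    S.E (fun ω => φ (A.indicator (fun _ => (1 : ℝ)) ω) (X ω)) =
      S.E (fun ω => S.E fun ω' => φ (A.indicator (fun _ => (1 : ℝ)) ω) (X ω'))

/-- Membership in `L_b¹`, via the characterization
`L_b¹ = {X ∈ L¹ : lim_n E(|X| I_{|X|>n}) = 0}`. -/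
def CondSLExp.InLb1 (S : CondSLExp Ω) (X : Ω → ℝ) : Prop :=
  Tendsto (fun n : ℕ => S.E fun ω => if (n : ℝ) < |X ω| then |X ω| else 0)
    atTop (nhds 0)

/-!
Stop the submartingale at the first index `τ ≥ 1` with `X_τ ≤ -λ`. The stopped process is again an
`SL`-submartingale, by locality on the `F_k`-measurable event `{τ ≤ k}`, so
`E(X_1) ≤ E(X_{τ ∧ n})`. On `B = {τ ≤ n}` we have `X_{τ ∧ n} ≤ -λ`, and off `B` it equals `X_n`;
hence `X_{τ ∧ n} ≤ λ(-I_B) + X_n + (-I_B X_n)`, and sub-additivity and positive homogeneity of `E`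
give the first inequality. The second is monotonicity, since `-I_B X_n ≤ X_n⁻`.
-/

namespace CondSLExp

variable (S : CondSLExp Ω) {f g : Ω → ℝ}

theorem neg_mem (hf : f ∈ S.H) : (fun ω => -(f ω)) ∈ S.H := by
  have h := S.smul_mem (-1) f hf
  rw [neg_one_smul] at h
  exact h

theorem negPart_mem (hf : f ∈ S.H) : (fun ω => -(min (f ω) 0)) ∈ S.H := by
  convert S.smul_mem (1 / 2) _ (S.add_mem _ (S.abs_mem f hf) _ (S.neg_mem hf)) using 1
  funext ω
  simp only [Pi.smul_apply, Pi.add_apply, smul_eq_mul]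
  rcases le_total (f ω) 0 with h | h
  · rw [min_eq_left h, abs_of_nonpos h]; ring
  · rw [min_eq_right h, abs_of_nonneg h]; ring

theorem piecewise_mem {A : Set Ω} [DecidablePred (· ∈ A)] (hA : MeasurableSet A)
    (hf : f ∈ S.H) (hg : g ∈ S.H) : A.piecewise f g ∈ S.H := by
  rw [← indicator_add_compl_eq_piecewise]
  exact S.add_mem _ (S.indmul_mem A hA f hf) _ (S.indmul_mem _ hA.compl g hg)

theorem E_zero : S.E (fun _ => 0) = 0 :=
  tendsto_const_nhds_iff.mp <| S.fatou (fun _ _ => 0) (fun _ => S.const_mem 0)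
    (fun _ => antitone_const) (fun _ => tendsto_const_nhds)

theorem E_eq_zero_of_isEmpty [IsEmpty Ω] (f : Ω → ℝ) : S.E f = 0 := by
  rw [Subsingleton.elim f fun _ => 0, S.E_zero]

theorem E_mono (hf : f ∈ S.H) (hg : g ∈ S.H) (hfg : ∀ ω, f ω ≤ g ω) : S.E f ≤ S.E g := by
  rcases isEmpty_or_nonempty Ω with hΩ | ⟨⟨ω₀⟩⟩
  · rw [Subsingleton.elim f g]
  · rw [← S.E0_eq f hf ω₀, ← S.E0_eq g hg ω₀]
    exact S.mono 0 f hf g hg hfg ω₀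

theorem E_Et (t : ℕ) (hf : f ∈ S.H) : S.E (S.Et t f) = S.E f := by
  rcases isEmpty_or_nonempty Ω with hΩ | ⟨⟨ω₀⟩⟩
  · rw [Subsingleton.elim (S.Et t f) f]
  · rw [← S.E0_eq _ (S.Et_mem t f hf) ω₀, S.tower 0 t t.zero_le f hf, S.E0_eq f hf ω₀]

theorem E_le_of_le_Et {t : ℕ} (hf : f ∈ S.H) (hg : g ∈ S.H) (hfg : ∀ ω, f ω ≤ S.Et t g ω) :
    S.E f ≤ S.E g :=
  S.E_Et t hg ▸ S.E_mono hf (S.Et_mem t g hg) hfg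

theorem E_add_le (hf : f ∈ S.H) (hg : g ∈ S.H) : S.E (f + g) ≤ S.E f + S.E g := by
  rcases isEmpty_or_nonempty Ω with hΩ | ⟨⟨ω₀⟩⟩
  · simp only [E_eq_zero_of_isEmpty, add_zero, le_refl]
  · rw [← S.E0_eq _ (S.add_mem f hf g hg) ω₀, ← S.E0_eq f hf ω₀, ← S.E0_eq g hg ω₀]
    exact S.subadd 0 f hf g hg ω₀

theorem E_const_mul {c : ℝ} (hc : 0 ≤ c) (hf : f ∈ S.H) :
    S.E (fun ω => c * f ω) = c * S.E f := by
  rcases isEmpty_or_nonempty Ω with hΩ | ⟨⟨ω₀⟩⟩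
  · simp only [E_eq_zero_of_isEmpty, mul_zero]
  have hcf : (fun ω => c * f ω) ∈ S.H := S.smul_mem c f hf
  have h := S.poshom 0 (fun _ => c) (S.const_mem c) measurable_const f hf hcf ω₀
  rwa [max_eq_left hc, max_eq_right (neg_nonpos.mpr hc), zero_mul, add_zero,
    S.E0_eq _ hcf ω₀, S.E0_eq f hf ω₀] at h

theorem Et_eqOn_of_eqOn {t : ℕ} {A : Set Ω} (hA : MeasurableSet[S.F t] A) (hf : f ∈ S.H)
    (hg : g ∈ S.H) (hfg : EqOn f g A) : EqOn (S.Et t f) (S.Et t g) A := by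
  intro ω hω
  have h := congrFun (S.locality t A hA g hg) ω
  rwa [← indicator_congr hfg, S.locality t A hA f hf, indicator_of_mem hω,
    indicator_of_mem hω] at h

end CondSLExp

section Stopping

variable {Ω : Type*}

def hitSet (X : ℕ → Ω → ℝ) (c : ℝ) (k : ℕ) : Set Ω :=
  {ω | ∃ j, 1 ≤ j ∧ j ≤ k ∧ X j ω ≤ c}

open Classical in
/-- `stoppedBelow X c k = X_{τ ∧ k}` for `k ≥ 1`, where `τ` is the first index `j ≥ 1` with
`X j ≤ c`. -/
noncomputable def stoppedBelow (X : ℕ → Ω → ℝ) (c : ℝ) : ℕ → Ω → ℝ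
  | 0 => X 0
  | k + 1 => (hitSet X c k).piecewise (stoppedBelow X c k) (X (k + 1))

variable {X : ℕ → Ω → ℝ} {c : ℝ} {k : ℕ} {ω : Ω}

theorem hitSet_zero : hitSet X c 0 = ∅ := by
  ext ω
  simp only [hitSet, mem_ofPred_eq, mem_empty_iff_false, iff_false, not_exists, not_and]
  omega

theorem hitSet_succ :
    hitSet X c (k + 1) = hitSet X c k ∪ {ω | X (k + 1) ω ≤ c} := by
  ext ω
  simp only [hitSet, mem_union, mem_ofPred_eq]
  constructor
  · rintro ⟨j, hj1, hjk, hj⟩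
    rcases Nat.lt_or_ge j (k + 1) with h | h
    · exact Or.inl ⟨j, hj1, by omega, hj⟩
    · exact Or.inr (by rwa [show j = k + 1 by omega] at hj)
  · rintro (⟨j, hj1, hjk, hj⟩ | h)
    · exact ⟨j, hj1, by omega, hj⟩
    · exact ⟨k + 1, by omega, le_rfl, h⟩

theorem measurableSet_hitSet {m : MeasurableSpace Ω} (hX : ∀ j ≤ k, Measurable[m] (X j)) :
    MeasurableSet[m] (hitSet X c k) := by
  induction k with
  | zero => rw [hitSet_zero]; exact .empty
  | succ k ih =>
    rw [hitSet_succ]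
    exact (ih fun j hj => hX j (by omega)).union
      (measurableSet_le (hX (k + 1) le_rfl) measurable_const)

theorem stoppedBelow_one : stoppedBelow X c 1 = X 1 := by
  classical
  funext ω
  exact piecewise_eq_of_notMem _ _ _ (by simp [hitSet_zero])

theorem stoppedBelow_eq_of_notMem (hω : ω ∉ hitSet X c k) : stoppedBelow X c k ω = X k ω := by
  cases k with
  | zero => rfl
  | succ k =>
    classical
    rw [hitSet_succ, mem_union, not_or] at hω
    simp only [stoppedBelow, piecewise_eq_of_notMem _ _ _ hω.1]

theorem stoppedBelow_le_of_mem (hω : ω ∈ hitSet X c k) : stoppedBelow X c k ω ≤ c := by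
  induction k with
  | zero => simp [hitSet_zero] at hω
  | succ k ih =>
    classical
    by_cases hk : ω ∈ hitSet X c k
    · simpa only [stoppedBelow, piecewise_eq_of_mem _ _ _ hk] using ih hk
    · rw [hitSet_succ, mem_union, or_iff_right hk] at hω
      rw [stoppedBelow, piecewise_eq_of_notMem _ _ _ hk]
      exact hω

theorem stoppedBelow_le_indicator (k : ℕ) (ω : Ω) :
    stoppedBelow X c k ω ≤
      c * (hitSet X c k).indicator (fun _ => 1) ω + (X k ω - (hitSet X c k).indicator (X k) ω) := by
  by_cases hω : ω ∈ hitSet X c k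
  · simpa [hω] using stoppedBelow_le_of_mem hω
  · simp [hω, stoppedBelow_eq_of_notMem hω]

end Stopping

namespace CondSLExp

variable (S : CondSLExp Ω) {X : ℕ → Ω → ℝ} (c : ℝ)

theorem measurableSet_hitSet (hadapt : ∀ j, Measurable[S.F j] (X j)) (k : ℕ) :
    MeasurableSet[S.F k] (hitSet X c k) :=
  _root_.measurableSet_hitSet fun j hj => (hadapt j).mono (S.F_mono hj) le_rfl

theorem stoppedBelow_measurable (hadapt : ∀ j, Measurable[S.F j] (X j)) (k : ℕ) :
    Measurable[S.F k] (stoppedBelow X c k) := by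
  classical
  induction k with
  | zero => exact hadapt 0
  | succ k ih =>
    exact Measurable.piecewise (S.F_mono k.le_succ _ (S.measurableSet_hitSet c hadapt k))
      (ih.mono (S.F_mono k.le_succ) le_rfl) (hadapt (k + 1))

theorem stoppedBelow_mem (hmem : ∀ j, X j ∈ S.H) (hadapt : ∀ j, Measurable[S.F j] (X j))
    (k : ℕ) : stoppedBelow X c k ∈ S.H := by
  classical
  induction k with
  | zero => exact hmem 0
  | succ k ih =>
    exact S.piecewise_mem (S.F_le k _ (S.measurableSet_hitSet c hadapt k)) ih (hmem (k + 1))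

theorem stoppedBelow_le_Et_succ (hmem : ∀ j, X j ∈ S.H) (hadapt : ∀ j, Measurable[S.F j] (X j))
    {k : ℕ} (hsub : ∀ ω, X k ω ≤ S.Et k (X (k + 1)) ω) (ω : Ω) :
    stoppedBelow X c k ω ≤ S.Et k (stoppedBelow X c (k + 1)) ω := by
  classical
  have hA := S.measurableSet_hitSet c hadapt k
  have hZ := S.stoppedBelow_mem c hmem hadapt
  by_cases hω : ω ∈ hitSet X c k
  · have hfrozen := S.Et_eqOn_of_eqOn hA (hZ (k + 1)) (hZ k) (piecewise_eqOn _ _ _) hω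
    rw [hfrozen, S.proj k _ (hZ k) (S.stoppedBelow_measurable c hadapt k)]
  · have hmoving :=
      S.Et_eqOn_of_eqOn hA.compl (hZ (k + 1)) (hmem (k + 1)) (piecewise_eqOn_compl _ _ _) hω
    rw [hmoving, stoppedBelow_eq_of_notMem hω]
    exact hsub ω

theorem E_le_E_stoppedBelow (hmem : ∀ j, X j ∈ S.H) (hadapt : ∀ j, Measurable[S.F j] (X j))
    {n : ℕ} (hn : 1 ≤ n) (hsub : ∀ k, 1 ≤ k → k < n → ∀ ω, X k ω ≤ S.Et k (X (k + 1)) ω) :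
    S.E (X 1) ≤ S.E (stoppedBelow X c n) := by
  induction n, hn using Nat.le_induction with
  | base => rw [stoppedBelow_one]
  | succ n hn ih =>
    have hZ := S.stoppedBelow_mem c hmem hadapt
    exact (ih fun k hk1 hkn => hsub k hk1 (by omega)).trans <|
      S.E_le_of_le_Et (hZ n) (hZ (n + 1))
        (S.stoppedBelow_le_Et_succ c hmem hadapt (hsub n hn n.lt_succ_self))

theorem E_stoppedBelow_le (hmem : ∀ j, X j ∈ S.H) (hadapt : ∀ j, Measurable[S.F j] (X j))
    {lam : ℝ} (hlam : 0 ≤ lam) (n : ℕ) :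
    S.E (stoppedBelow X (-lam) n) ≤
      lam * S.E (fun ω => -((hitSet X (-lam) n).indicator (fun _ => 1) ω)) +
        (S.E (X n) + S.E (fun ω => -((hitSet X (-lam) n).indicator (X n) ω))) := by
  set B := hitSet X (-lam) n
  have hB : MeasurableSet B := S.F_le n _ (S.measurableSet_hitSet (-lam) hadapt n)
  have hIB := S.neg_mem (S.indmul_mem B hB _ (S.const_mem 1))
  have hIBX := S.neg_mem (S.indmul_mem B hB _ (hmem n))
  have hlamIB : (fun ω => lam * -(B.indicator (fun _ => 1) ω)) ∈ S.H := S.smul_mem lam _ hIB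
  have hrest : (X n + fun ω => -(B.indicator (X n) ω)) ∈ S.H := S.add_mem _ (hmem n) _ hIBX
  calc S.E (stoppedBelow X (-lam) n)
      ≤ S.E ((fun ω => lam * -(B.indicator (fun _ => 1) ω)) +
          (X n + fun ω => -(B.indicator (X n) ω))) :=
        S.E_mono (S.stoppedBelow_mem _ hmem hadapt n) (S.add_mem _ hlamIB _ hrest) fun ω => by
          have := stoppedBelow_le_indicator (X := X) (c := -lam) n ω
          simp only [Pi.add_apply]
          linarith
    _ ≤ S.E (fun ω => lam * -(B.indicator (fun _ => 1) ω)) +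
          (S.E (X n) + S.E (fun ω => -(B.indicator (X n) ω))) :=
        (S.E_add_le hlamIB hrest).trans (add_le_add le_rfl (S.E_add_le (hmem n) hIBX))
    _ = _ := by rw [S.E_const_mul hlam hIB]

end CondSLExp

/-- Doob's minimal inequality for `SL`-submartingales, part (ii): if
`(X_j, F_j)_{j=1}^n` is an `SL`-submartingale, then for every `λ > 0`, with
`B = {min_{1≤j≤n} X_j ≤ -λ}` and lower capacity `v(B) := -E(-I_B)`,
`λ·v(B) ≤ E(X_n) - E(X_1) + E(-I_B X_n) ≤ E(X_n) - E(X_1) + E(X_n⁻)`. -/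
theorem doob_submartingale_min (S : CondSLExp Ω) (n : ℕ) (hn : 1 ≤ n)
    (X : ℕ → Ω → ℝ) (hmem : ∀ j, X j ∈ S.H)
    (hadapt : ∀ j, Measurable[S.F j] (X j))
    (hsub : ∀ s t : ℕ, 1 ≤ s → s ≤ t → t ≤ n → ∀ ω, X s ω ≤ S.Et s (X t) ω)
    (lam : ℝ) (hlam : 0 < lam) :
    lam * (-(S.E (fun ω => -({ω' | ∃ j, 1 ≤ j ∧ j ≤ n ∧ X j ω' ≤ -lam}.indicator
          (fun _ => (1 : ℝ)) ω)))) ≤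
        S.E (X n) - S.E (X 1) +
          S.E (fun ω => -({ω' | ∃ j, 1 ≤ j ∧ j ≤ n ∧ X j ω' ≤ -lam}.indicator (X n) ω)) ∧
      S.E (X n) - S.E (X 1) +
          S.E (fun ω => -({ω' | ∃ j, 1 ≤ j ∧ j ≤ n ∧ X j ω' ≤ -lam}.indicator (X n) ω)) ≤
        S.E (X n) - S.E (X 1) + S.E (fun ω => -(min (X n ω) 0)) := by
  set B : Set Ω := {ω' | ∃ j, 1 ≤ j ∧ j ≤ n ∧ X j ω' ≤ -lam}
  have hstop : S.E (X 1) ≤ S.E (stoppedBelow X (-lam) n) :=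
    S.E_le_E_stoppedBelow (-lam) hmem hadapt hn fun k hk hkn => hsub k (k + 1) hk k.le_succ hkn
  have hend : S.E (stoppedBelow X (-lam) n) ≤
      lam * S.E (fun ω => -(B.indicator (fun _ => 1) ω)) +
        (S.E (X n) + S.E (fun ω => -(B.indicator (X n) ω))) :=
    S.E_stoppedBelow_le hmem hadapt hlam.le n
  have hB : MeasurableSet B := S.F_le n _ (S.measurableSet_hitSet (-lam) hadapt n)
  have hnegPart : S.E (fun ω => -(B.indicator (X n) ω)) ≤ S.E (fun ω => -(min (X n ω) 0)) :=
    S.E_mono (S.neg_mem (S.indmul_mem B hB _ (hmem n))) (S.negPart_mem (hmem n)) fun ω => by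
      by_cases hω : ω ∈ B <;> simp [hω]
  constructor <;> linarith
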